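/- For every n ≥ 1 there is a polynomial q_n ∈ ℚ[X] of degree n + 2 with q_n(k) = p_n(k) for all positive integers k, and q_n satisfies q_n(-X) = (-1)^n q_n(X), where p_n(k) = ∑_{j=1}^{k} j^{n+1} + ∑_{j=k+1}^{2k} (2k - j) j^n. -/

import Mathlib

/-!
Let `F_m` be Faulhaber's polynomial, `F_m(k) = ∑_{j<k} j^m`, normalised through the Bernoulli
polynomial `B_{m+1}`. Splitting the second sum of `p_n(k)` at `k` gives
`p_n(k) = 2 F_{n+1}(k) + 2k (F_n(2k) - F_n(k)) - F_{n+1}(2k)`, and the right-hand side is `q_n`.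
Its coefficient of `X^{n+2}` is `(2^{n+2} - 2) / ((n+1)(n+2)) ≠ 0`. For the parity, the reflection
`B_{m+1}(-x) = (-1)^{m+1} (B_{m+1}(x) + (m+1) x^m)` together with `(-1)^{m+1} B_{m+1} = B_{m+1}`
(for `m ≥ 1`) gives `F_m(-x) = (-1)^{m+1} (F_m(x) + x^m)`, and the correction terms `x^m` cancel
in `q_n(-x)`.
-/

open Polynomial

/-- The power sum `p_n(k) = ∑_{j=1}^{k} j^{n+1} + ∑_{j=k+1}^{2k} (2k - j) j^n`. -/
def powerSum (n k : ℕ) : ℚ :=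
  (∑ j ∈ Finset.Icc 1 k, (j : ℚ) ^ (n + 1)) +
    ∑ j ∈ Finset.Icc (k + 1) (2 * k), ((2 * k : ℚ) - j) * (j : ℚ) ^ n

open Finset

namespace Polynomial

theorem natDegree_bernoulli (n : ℕ) : (bernoulli n).natDegree = n :=
  natDegree_eq_of_le_of_coeff_ne_zero
    (natDegree_le_iff_coeff_eq_zero.2 fun i hi => by simp [coeff_bernoulli, not_le.2 hi])
    (by simp [coeff_bernoulli])

theorem coeff_bernoulli_self (n : ℕ) : (bernoulli n).coeff n = 1 := by
  simp [coeff_bernoulli]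

theorem natDegree_comp_C_mul_X_le {R : Type*} [Semiring R] (p : R[X]) (r : R) :
    (p.comp (C r * X)).natDegree ≤ p.natDegree :=
  natDegree_le_iff_coeff_eq_zero.2 fun i hi => by
    rw [comp_C_mul_X_coeff, coeff_eq_zero_of_natDegree_lt hi, zero_mul]

end Polynomial

theorem neg_one_pow_mul_bernoulli {n : ℕ} (hn : n ≠ 1) :
    (-1) ^ n * _root_.bernoulli n = _root_.bernoulli n := by
  rw [← bernoulli'_eq_bernoulli, bernoulli_eq_bernoulli'_of_ne_one hn]

noncomputable def faulhaber (m : ℕ) : ℚ[X] :=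
  C ((m + 1 : ℚ)⁻¹) * (Polynomial.bernoulli (m + 1) - C (_root_.bernoulli (m + 1)))

theorem faulhaber_eval_natCast (m k : ℕ) :
    (faulhaber m).eval (k : ℚ) = ∑ j ∈ range k, (j : ℚ) ^ m := by
  rw [faulhaber, eval_mul, eval_C, eval_sub, eval_C, bernoulli_succ_eval]
  field_simp
  ring

theorem faulhaber_eval_neg {m : ℕ} (hm : 1 ≤ m) (x : ℚ) :
    (faulhaber m).eval (-x) = (-1) ^ (m + 1) * ((faulhaber m).eval x + x ^ m) := by
  have hb := neg_one_pow_mul_bernoulli (n := m + 1) (by omega)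
  simp only [faulhaber, eval_mul, eval_C, eval_sub, bernoulli_eval_neg]
  push_cast
  field_simp
  linear_combination hb

theorem coeff_faulhaber_succ (m : ℕ) : (faulhaber m).coeff (m + 1) = (m + 1 : ℚ)⁻¹ := by
  simp [faulhaber, coeff_bernoulli_self]

theorem natDegree_faulhaber (m : ℕ) : (faulhaber m).natDegree = m + 1 := by
  rw [faulhaber, natDegree_C_mul (by positivity), natDegree_sub_C, natDegree_bernoulli]

theorem powerSum_eq_sum_range (n k : ℕ) :
    powerSum n k = 2 * ∑ j ∈ range k, (j : ℚ) ^ (n + 1)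
      + 2 * k * (∑ j ∈ range (2 * k), (j : ℚ) ^ n - ∑ j ∈ range k, (j : ℚ) ^ n)
      - ∑ j ∈ range (2 * k), (j : ℚ) ^ (n + 1) := by
  have hIcc {a b : ℕ} (hab : a ≤ b + 1) (f : ℕ → ℚ) :
      ∑ j ∈ Icc a b, f j = ∑ j ∈ range (b + 1), f j - ∑ j ∈ range a, f j := by
    rw [← Ico_add_one_right_eq_Icc, sum_Ico_eq_sub _ hab]
  have hsum (t : ℕ) : ∑ j ∈ range t, ((2 * k : ℚ) - j) * (j : ℚ) ^ n
      = 2 * k * ∑ j ∈ range t, (j : ℚ) ^ n - ∑ j ∈ range t, (j : ℚ) ^ (n + 1) := by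
    rw [mul_sum, ← sum_sub_distrib]
    exact sum_congr rfl fun j _ => by ring
  rw [powerSum, hIcc (by omega), hIcc (by omega), hsum, hsum]
  simp only [sum_range_succ, sum_range_zero]
  push_cast
  ring

noncomputable def powerSumPoly (n : ℕ) : ℚ[X] :=
  C 2 * faulhaber (n + 1) + C 2 * X * ((faulhaber n).comp (C 2 * X) - faulhaber n)
    - (faulhaber (n + 1)).comp (C 2 * X)

theorem powerSumPoly_eval (n : ℕ) (x : ℚ) :
    (powerSumPoly n).eval x = 2 * (faulhaber (n + 1)).eval x
      + 2 * x * ((faulhaber n).eval (2 * x) - (faulhaber n).eval x)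
      - (faulhaber (n + 1)).eval (2 * x) := by
  simp only [powerSumPoly, eval_sub, eval_add, eval_mul, eval_comp, eval_C, eval_X]

theorem powerSumPoly_eval_natCast (n k : ℕ) : (powerSumPoly n).eval (k : ℚ) = powerSum n k := by
  rw [powerSumPoly_eval, powerSum_eq_sum_range, ← Nat.cast_ofNat, ← Nat.cast_mul]
  simp only [faulhaber_eval_natCast]

theorem powerSumPoly_comp_neg_X {n : ℕ} (hn : 1 ≤ n) :
    (powerSumPoly n).comp (-X) = C ((-1) ^ n) * powerSumPoly n := by
  refine Polynomial.funext fun x => ?_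
  simp only [eval_comp, eval_neg, eval_X, eval_mul, eval_C, powerSumPoly_eval, mul_neg,
    faulhaber_eval_neg hn, faulhaber_eval_neg (by omega : 1 ≤ n + 1)]
  ring

theorem coeff_powerSumPoly (n : ℕ) :
    (powerSumPoly n).coeff (n + 2) = (2 ^ (n + 2) - 2) / ((n + 1) * (n + 2)) := by
  simp only [powerSumPoly, coeff_sub, coeff_add, coeff_C_mul, mul_assoc, coeff_X_mul,
    comp_C_mul_X_coeff, coeff_faulhaber_succ]
  push_cast
  field_simp
  ring

theorem natDegree_powerSumPoly_le (n : ℕ) : (powerSumPoly n).natDegree ≤ n + 2 := by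
  have hF (m : ℕ) : (faulhaber m).natDegree ≤ m + 1 := (natDegree_faulhaber m).le
  have hFcomp (m : ℕ) : ((faulhaber m).comp (C 2 * X)).natDegree ≤ m + 1 :=
    (natDegree_comp_C_mul_X_le _ _).trans (hF m)
  have hCX : (C 2 * X : ℚ[X]).natDegree ≤ 1 := (natDegree_C_mul_le _ _).trans natDegree_X_le
  refine natDegree_sub_le_of_le (natDegree_add_le_of_degree_le
    ((natDegree_C_mul_le _ _).trans (hF _)) ?_) (hFcomp _) |>.trans (by simp)
  refine (natDegree_mul_le_of_le hCX (natDegree_sub_le_of_le (hFcomp n) (hF n))).trans ?_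
  omega

theorem natDegree_powerSumPoly (n : ℕ) : (powerSumPoly n).natDegree = n + 2 := by
  refine natDegree_eq_of_le_of_coeff_ne_zero (natDegree_powerSumPoly_le n) ?_
  have h4 : (4 : ℚ) ≤ 2 ^ (n + 2) :=
    calc (4 : ℚ) = 2 ^ 2 := by norm_num
      _ ≤ 2 ^ (n + 2) := pow_le_pow_right₀ one_le_two (by omega)
  rw [coeff_powerSumPoly]
  exact div_ne_zero (by linarith) (by positivity)

theorem stmt_11 (n : ℕ) (hn : 1 ≤ n) :
    ∃ q : Polynomial ℚ, q.natDegree = n + 2 ∧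
      (∀ k : ℕ, 0 < k → q.eval (k : ℚ) = powerSum n k) ∧
      q.comp (-Polynomial.X) = Polynomial.C ((-1 : ℚ) ^ n) * q :=
  ⟨powerSumPoly n, natDegree_powerSumPoly n, fun k _ => powerSumPoly_eval_natCast n k,
    powerSumPoly_comp_neg_X hn⟩
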